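/- Let k₁ ≥ 1 be real and let s₁₂, s₂, p₁, p₂ be real. Then the complex-valued function t ↦ t^{i s₂ - 1/2 - i p₂} · (1-t)^{-i s₁₂ - 1/2 + i p₁ + i p₂} · ₂F₁(1-k₁-i s₁₂+i s₂, k₁-i s₁₂+i s₂; 1+2i s₂; t) is integrable with respect to Lebesgue measure on (0,1/2), and the function t ↦ t^{i s₂ - i p₂ - 1/2} · (1-t)^{i s₁₂ - 1/2 + i p₁ + i p₂} · ₂F₁(k₁+i s₁₂+i s₂, 1-k₁+i s₁₂+i s₂; 1+2i s₁₂; 1-t) is integrable with respect to Lebesgue measure on (1/2,1). (Convergence of the two pieces of the integral I₂(+,C,C).) -/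

import Mathlib

/-!
Both pieces have the form `t ^ w₁ * (1 - t) ^ w₂ * ₂F₁(a, b; c; x)` with `Re w₁ = Re w₂ = -1/2`
and `x` ranging over `[0, 1/2]`. The series `hyp` is Mathlib's `ordinaryHypergeometric`, whose
radius of convergence is at least `1` as soon as `c` is not a nonpositive integer, so `₂F₁` is
continuous on `[0, 1/2]`. On `[0, 1/2]` the first integrand is thus the power `t ^ w₁`, integrable
since `Re w₁ > -1`, times a function continuous on a compact interval.
The second piece is the first one after the substitution `t ↦ 1 - t`.
-/

open Complex Filter Set MeasureTheory

/-- The `n`-th term of the Gauss hypergeometric series `₂F₁(a,b;c;z)`. -/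
noncomputable def hypTerm (a b c z : ℂ) (n : ℕ) : ℂ :=
  (ascPochhammer ℂ n).eval a * (ascPochhammer ℂ n).eval b /
    ((ascPochhammer ℂ n).eval c * (n.factorial : ℂ)) * z ^ n

/-- The Gauss hypergeometric function `₂F₁(a,b;c;z)`. -/
noncomputable def hyp (a b c z : ℂ) : ℂ := ∑' n, hypTerm a b c z n

theorem hyp_eq_ordinaryHypergeometric (a b c : ℂ) : hyp a b c = ordinaryHypergeometric a b c := by
  rw [ordinaryHypergeometric_eq_tsum]
  ext z
  refine tsum_congr fun n => ?_
  rw [hypTerm, smul_eq_mul]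
  field_simp

theorem one_le_radius_ordinaryHypergeometricSeries {a b c : ℂ}
    (hc : ∀ k : ℕ, (k : ℂ) ≠ -c) : 1 ≤ (ordinaryHypergeometricSeries ℂ a b c).radius := by
  by_cases ha : ∃ k : ℕ, (k : ℂ) = -a
  · obtain ⟨k, hk⟩ := ha
    rw [show a = -(k : ℂ) by rw [hk, neg_neg], ordinaryHypergeometric_radius_top_of_neg_nat₁]
    exact le_top
  by_cases hb : ∃ k : ℕ, (k : ℂ) = -b
  · obtain ⟨k, hk⟩ := hb
    rw [show b = -(k : ℂ) by rw [hk, neg_neg], ordinaryHypergeometric_radius_top_of_neg_nat₂]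
    exact le_top
  push Not at ha hb
  exact (ordinaryHypergeometricSeries_radius_eq_one ℂ a b c fun k => ⟨ha k, hb k, hc k⟩).ge

theorem continuousOn_hyp {a b c : ℂ} (hc : ∀ k : ℕ, (k : ℂ) ≠ -c) :
    ContinuousOn (hyp a b c) (Metric.ball 0 1) := by
  rw [hyp_eq_ordinaryHypergeometric]
  refine FormalMultilinearSeries.continuousOn.mono fun z hz => ?_
  rw [Metric.mem_ball, dist_zero_right] at hz
  rw [Metric.mem_eball, edist_zero_right, ← ofReal_norm]
  exact (ENNReal.ofReal_lt_one.2 hz).trans_le (one_le_radius_ordinaryHypergeometricSeries hc)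

theorem integrableOn_cpow_mul_cpow_mul_hyp {w₁ : ℂ} (w₂ : ℂ) {a b c : ℂ} {r : ℝ}
    (hw₁ : -1 < w₁.re) (hc : ∀ k : ℕ, (k : ℂ) ≠ -c) (hr : r < 1) :
    IntegrableOn (fun t : ℝ => (t : ℂ) ^ w₁ * ((1 - t : ℝ) : ℂ) ^ w₂ * hyp a b c t)
      (Ioo 0 r) := by
  rcases le_or_gt r 0 with hr0 | hr0
  · simp [Ioo_eq_empty_of_le hr0]
  have hpow : IntegrableOn (fun t : ℝ => (t : ℂ) ^ w₁) (Icc 0 r) :=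
    (intervalIntegrable_iff_integrableOn_Icc_of_le hr0.le).1
      (intervalIntegral.intervalIntegrable_cpow' hw₁)
  have hcont : ContinuousOn (fun t : ℝ => ((1 - t : ℝ) : ℂ) ^ w₂ * hyp a b c t) (Icc 0 r) := by
    refine ContinuousOn.mul (fun t ht => ?_) ((continuousOn_hyp hc).comp
      Complex.continuous_ofReal.continuousOn fun t ht => ?_)
    · exact ((continuous_ofReal.comp (continuous_sub_left 1)).continuousAt.cpow continuousAt_const
        (Complex.ofReal_mem_slitPlane.2 (by linarith [ht.2]))).continuousWithinAt
    · rw [Metric.mem_ball, dist_zero_right, Complex.norm_real, Real.norm_of_nonneg ht.1]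
      exact ht.2.trans_lt hr
  simpa only [mul_assoc] using
    (hpow.mul_continuousOn hcont isCompact_Icc).mono_set Ioo_subset_Icc_self

theorem integrableOn_cpow_mul_cpow_mul_hyp_one_sub (w₁ : ℂ) {w₂ : ℂ} {a b c : ℂ} {r : ℝ}
    (hw₂ : -1 < w₂.re) (hc : ∀ k : ℕ, (k : ℂ) ≠ -c) (hr : 0 < r) :
    IntegrableOn (fun t : ℝ => (t : ℂ) ^ w₁ * ((1 - t : ℝ) : ℂ) ^ w₂ * hyp a b c (1 - t : ℝ))
      (Ioo r 1) := by
  have hpre : (fun t : ℝ => 1 - t) ⁻¹' Ioo r 1 = Ioo 0 (1 - r) := by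
    ext t
    simp only [mem_preimage, mem_Ioo]
    constructor <;> rintro ⟨h₁, h₂⟩ <;> constructor <;> linarith
  rw [← (Measure.measurePreserving_sub_left volume 1).integrableOn_comp_preimage
    (Homeomorph.subLeft (1 : ℝ)).measurableEmbedding, hpre]
  refine (integrableOn_cpow_mul_cpow_mul_hyp (a := a) (b := b) w₁ hw₂ hc (by linarith)).congr_fun
    (fun t _ => ?_) measurableSet_Ioo
  simp only [Function.comp_apply, sub_sub_cancel]
  ring

theorem integral_PCC_I2_integrable_general (k₁ s₁₂ s₂ p₁ p₂ : ℝ) :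
    IntegrableOn (fun t : ℝ =>
        ((t : ℝ) : ℂ) ^ (I * (s₂ : ℂ) - 1 / 2 - I * (p₂ : ℂ)) *
          ((1 - t : ℝ) : ℂ) ^ (-(I * (s₁₂ : ℂ)) - 1 / 2 + I * (p₁ : ℂ) + I * (p₂ : ℂ)) *
          hyp (1 - k₁ - I * (s₁₂ : ℂ) + I * (s₂ : ℂ))
            ((k₁ : ℂ) - I * (s₁₂ : ℂ) + I * (s₂ : ℂ)) (1 + 2 * I * (s₂ : ℂ)) t)
      (Ioo 0 (1 / 2)) volume ∧
    IntegrableOn (fun t : ℝ =>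
        ((t : ℝ) : ℂ) ^ (I * (s₂ : ℂ) - I * (p₂ : ℂ) - 1 / 2) *
          ((1 - t : ℝ) : ℂ) ^ (I * (s₁₂ : ℂ) - 1 / 2 + I * (p₁ : ℂ) + I * (p₂ : ℂ)) *
          hyp ((k₁ : ℂ) + I * (s₁₂ : ℂ) + I * (s₂ : ℂ))
            (1 - k₁ + I * (s₁₂ : ℂ) + I * (s₂ : ℂ)) (1 + 2 * I * (s₁₂ : ℂ))
            ((1 - t : ℝ) : ℂ))
      (Ioo (1 / 2) 1) volume := by
  have hc (s : ℝ) (k : ℕ) : (k : ℂ) ≠ -(1 + 2 * I * s) := fun h => by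
    have hk : (k : ℝ) = -1 := by simpa using congrArg re h
    linarith [k.cast_nonneg (α := ℝ)]
  exact ⟨integrableOn_cpow_mul_cpow_mul_hyp _ (by norm_num) (hc s₂) (by norm_num),
    integrableOn_cpow_mul_cpow_mul_hyp_one_sub _ (by norm_num) (hc s₁₂) (by norm_num)⟩

/-- Convergence of the two pieces of the integral `I₂(+,C,C)`. -/
theorem integral_PCC_I2_integrable (k₁ s₁₂ s₂ p₁ p₂ : ℝ) (h1 : 1 ≤ k₁) :
    IntegrableOn (fun t : ℝ =>
        ((t : ℝ) : ℂ) ^ (I * (s₂ : ℂ) - 1 / 2 - I * (p₂ : ℂ)) *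
          ((1 - t : ℝ) : ℂ) ^ (-(I * (s₁₂ : ℂ)) - 1 / 2 + I * (p₁ : ℂ) + I * (p₂ : ℂ)) *
          hyp (1 - k₁ - I * (s₁₂ : ℂ) + I * (s₂ : ℂ))
            ((k₁ : ℂ) - I * (s₁₂ : ℂ) + I * (s₂ : ℂ)) (1 + 2 * I * (s₂ : ℂ)) t)
      (Ioo 0 (1 / 2)) volume ∧
    IntegrableOn (fun t : ℝ =>
        ((t : ℝ) : ℂ) ^ (I * (s₂ : ℂ) - I * (p₂ : ℂ) - 1 / 2) *
          ((1 - t : ℝ) : ℂ) ^ (I * (s₁₂ : ℂ) - 1 / 2 + I * (p₁ : ℂ) + I * (p₂ : ℂ)) *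
          hyp ((k₁ : ℂ) + I * (s₁₂ : ℂ) + I * (s₂ : ℂ))
            (1 - k₁ + I * (s₁₂ : ℂ) + I * (s₂ : ℂ)) (1 + 2 * I * (s₁₂ : ℂ))
            ((1 - t : ℝ) : ℂ))
      (Ioo (1 / 2) 1) volume :=
  integral_PCC_I2_integrable_general k₁ s₁₂ s₂ p₁ p₂
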